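/- arXiv:1503.05302 — 3 statements merged into one kernel-verified Lean document; each statement's English description precedes it below -/
import Mathlib

section
/- Let d ≥ 1, α ∈ (0,2), let D ⊂ ℝ^d be a bounded open set, and let p : (0,∞) × D × D → [0,∞) be measurable with the semigroup property. Suppose: (a) there is c₁ > 0 with p(1/2, x, y) ≤ c₁·min(1, δ_D(x)^{α/2})·min(1, δ_D(y)^{α/2}) for all x, y ∈ D; (b) there are r₁ > 0 and c₂ > 0 with p(1, x, y) ≥ c₂·min(1, δ_D(x)^{α/2})·min(1, δ_D(y)^{α/2})·min(1, |x−y|^{−(d+α)}) whenever x, y ∈ D satisfy |x−y| < r₁; (c) there is κ ∈ (0,1) such that for every x ∈ D there exists a point A(x) with B(A(x), κ r₁) ⊆ B(x, r₁) ∩ D; (d) there exist λ₁ ∈ ℝ and a continuous, strictly positive function φ : D → (0,∞) with ∫_D φ² dx = 1 and ∫_D p(t,x,y) φ(y) dy = e^{−λ₁ t} φ(x) for all t > 0 and x ∈ D. Then there exists a constant C > 0 such that for all t ≥ 1 and all x, y ∈ D: p(t,x,y) ≤ C·e^{−λ₁ t}·min(1, δ_D(x)^{α/2})·min(1, δ_D(y)^{α/2}).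 -/
open MeasureTheory Metric Set Bornology Pointwise

noncomputable section

/-- distance to the boundary `∂D` -/
def deltaD {d : ℕ} (D : Set (EuclideanSpace ℝ (Fin d))) (x : EuclideanSpace ℝ (Fin d)) : ℝ :=
  Metric.infDist x (frontier D)

set_option maxHeartbeats 1000000

/-- sharp large time upper bound with rate `λ₁`.  Here
`(max 1 ‖x-y‖)^{-(d+α)}` encodes `min(1, |x-y|^{-(d+α)})` (with the convention
that the latter equals `1` when `x = y`). -/
theorem sharp_large_time_upper_bound (d : ℕ) (hd : 1 ≤ d) (α : ℝ) (hα0 : 0 < α) (hα2 : α < 2)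
    (D : Set (EuclideanSpace ℝ (Fin d))) (hD : IsOpen D) (hDbdd : Bornology.IsBounded D)
    (p : ℝ → EuclideanSpace ℝ (Fin d) → EuclideanSpace ℝ (Fin d) → ℝ)
    (hmeas : ∀ t > 0, Measurable (Function.uncurry (p t)))
    (hnonneg : ∀ t > 0, ∀ x y, 0 ≤ p t x y)
    (hsemi : ∀ s > 0, ∀ t > 0, ∀ x ∈ D, ∀ y ∈ D,
      p (t + s) x y = ∫ z in D, p t x z * p s z y)
    (c₁ : ℝ) (hc₁ : 0 < c₁)
    (ha : ∀ x ∈ D, ∀ y ∈ D, p (1 / 2) x y ≤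
      c₁ * min 1 (deltaD D x ^ (α / 2)) * min 1 (deltaD D y ^ (α / 2)))
    (r₁ c₂ : ℝ) (hr₁ : 0 < r₁) (hc₂ : 0 < c₂)
    (hb : ∀ x ∈ D, ∀ y ∈ D, ‖x - y‖ < r₁ →
      c₂ * min 1 (deltaD D x ^ (α / 2)) * min 1 (deltaD D y ^ (α / 2)) *
          max 1 ‖x - y‖ ^ (-((d : ℝ) + α)) ≤ p 1 x y)
    (κ : ℝ) (hκ : κ ∈ Set.Ioo (0 : ℝ) 1)
    (hball : ∀ x ∈ D, ∃ A : EuclideanSpace ℝ (Fin d),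
      Metric.ball A (κ * r₁) ⊆ Metric.ball x r₁ ∩ D)
    (lam₁ : ℝ) (φ : EuclideanSpace ℝ (Fin d) → ℝ)
    (hφcont : ContinuousOn φ D) (hφpos : ∀ x ∈ D, 0 < φ x)
    (hφnorm : (∫ x in D, φ x ^ 2) = 1)
    (heig : ∀ t > 0, ∀ x ∈ D, (∫ y in D, p t x y * φ y) = Real.exp (-lam₁ * t) * φ x) :
    ∃ C > 0, ∀ t ≥ 1, ∀ x ∈ D, ∀ y ∈ D,
      p t x y ≤ C * Real.exp (-lam₁ * t) *
        min 1 (deltaD D x ^ (α / 2)) * min 1 (deltaD D y ^ (α / 2)) := by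
  rcases D.eq_empty_or_nonempty with hDe | hDne
  · exact ⟨1, one_pos, by simp [hDe]⟩
  haveI : Nonempty (Fin d) := ⟨⟨0, hd⟩⟩
  obtain ⟨hκ0, hκ1⟩ := hκ
  set ψ : EuclideanSpace ℝ (Fin d) → ℝ := fun x => min 1 (deltaD D x ^ (α / 2)) with hψdef
  have hψ0 : ∀ x, 0 ≤ ψ x := fun x =>
    le_min zero_le_one (Real.rpow_nonneg Metric.infDist_nonneg _)
  have hψ1 : ∀ x, ψ x ≤ 1 := fun x => min_le_left _ _
  have hDmeas : MeasurableSet D := hD.measurableSet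
  -- frontier is nonempty
  have hfr : (frontier D).Nonempty := by
    by_contra h
    rw [not_nonempty_iff_eq_empty] at h
    have hclopen : IsClopen D := isClopen_iff_frontier_eq_empty.mpr h
    rcases isClopen_iff.mp hclopen with h1 | h1
    · exact hDne.ne_empty h1
    · rw [h1] at hDbdd
      exact NormedSpace.unbounded_univ ℝ (EuclideanSpace ℝ (Fin d)) hDbdd
  -- interior ball gives lower bound on distance to the boundary
  have hdelta_ball : ∀ (w : EuclideanSpace ℝ (Fin d)) (r : ℝ), ball w r ⊆ D → r ≤ deltaD D w := by
    intro w r hsub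
    by_contra hlt
    push_neg at hlt
    obtain ⟨z, hz, hdz⟩ := (Metric.infDist_lt_iff hfr).mp hlt
    have hzD : z ∈ D := hsub (by rwa [mem_ball, dist_comm])
    rw [hD.frontier_eq] at hz
    exact hz.2 hzD
  -- basic measurability
  have hp_sect : ∀ t, 0 < t → ∀ x, Measurable (fun y => p t x y) := fun t ht x =>
    (hmeas t ht).comp measurable_prodMk_left
  have hp_sect' : ∀ t, 0 < t → ∀ y, Measurable (fun x => p t x y) := fun t ht y =>
    (hmeas t ht).comp measurable_prodMk_right
  -- volume facts
  have hDfin : volume D < ⊤ := hDbdd.measure_lt_top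
  -- φ integrability
  have hφmeasD : AEMeasurable φ (volume.restrict D) := hφcont.aemeasurable hDmeas
  have hφ2int : IntegrableOn (fun y => φ y ^ 2) D := by
    by_contra h
    rw [MeasureTheory.integral_undef h] at hφnorm
    exact one_ne_zero hφnorm.symm
  have hconst1 : IntegrableOn (fun _ : EuclideanSpace ℝ (Fin d) => (1:ℝ)) D volume :=
    integrableOn_const hDfin.ne
  have hgdom : IntegrableOn (fun y => (φ y ^ 2 + 1) / 2) D volume := by
    exact (hφ2int.add hconst1).div_const 2
  have hφint : IntegrableOn φ D := by
    refine Integrable.mono' hgdom hφmeasD.aestronglyMeasurable ?_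
    refine (ae_restrict_iff' hDmeas).mpr (ae_of_all _ fun y hy => ?_)
    have hpos := hφpos y hy
    rw [Real.norm_eq_abs, abs_of_pos hpos]
    nlinarith [sq_nonneg (φ y - 1)]
  -- eigenfunction integrals are genuinely integrable
  have heig_int : ∀ t, 0 < t → ∀ x ∈ D, IntegrableOn (fun y => p t x y * φ y) D := by
    intro t ht x hx
    by_contra h
    have he := heig t ht x hx
    rw [MeasureTheory.integral_undef h] at he
    have : 0 < Real.exp (-lam₁ * t) * φ x := mul_pos (Real.exp_pos _) (hφpos x hx)
    rw [← he] at this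
    exact lt_irrefl 0 this
  -- the compact set where δ ≥ ρ
  set ρ : ℝ := κ * r₁ / 2 with hρdef
  have hρ : 0 < ρ := by positivity
  set S : Set (EuclideanSpace ℝ (Fin d)) :=
    closure D ∩ {w | ρ ≤ deltaD D w} with hSdef
  have hSsubD : S ⊆ D := by
    rintro w ⟨hw1, hw2⟩
    simp only [mem_setOf_eq] at hw2
    rcases (closure_eq_self_union_frontier D ▸ hw1) with h | h
    · exact h
    · exfalso
      have : deltaD D w = 0 := Metric.infDist_zero_of_mem h
      rw [this] at hw2
      linarith
  have hScomp : IsCompact S := by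
    refine Metric.isCompact_of_isClosed_isBounded
      (isClosed_closure.inter (isClosed_le continuous_const (continuous_infDist_pt _)))
      (hDbdd.closure.subset inter_subset_left)
  have hSne : S.Nonempty := by
    obtain ⟨x₀, hx₀⟩ := hDne
    obtain ⟨A, hA⟩ := hball x₀ hx₀
    have hAD : ball A (κ * r₁) ⊆ D := fun u hu => (hA hu).2
    have hAmem : A ∈ D := hAD (mem_ball_self (by positivity))
    refine ⟨A, subset_closure hAmem, ?_⟩
    have := hdelta_ball A (κ * r₁) hAD
    simp only [mem_setOf_eq]
    linarith
  obtain ⟨w₀, hw₀S, hw₀min⟩ := hScomp.exists_isMinOn hSne (hφcont.mono hSsubD)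
  have hw₀pos : 0 < φ w₀ := hφpos w₀ (hSsubD hw₀S)
  set m : ℝ := min 1 (ρ ^ (α / 2)) with hmdef
  have hm : 0 < m := lt_min one_pos (Real.rpow_pos_of_pos hρ _)
  have hψS : ∀ w, ρ ≤ deltaD D w → m ≤ ψ w := fun w hw =>
    min_le_min le_rfl (Real.rpow_le_rpow hρ.le hw (by positivity))
  -- lower bound constant
  set v : ℝ := (volume (ball (0 : EuclideanSpace ℝ (Fin d)) ρ)).toReal with hvdef
  have hv : 0 < v :=
    ENNReal.toReal_pos (measure_ball_pos volume _ hρ).ne' measure_ball_lt_top.ne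
  set K : ℝ := c₂ * m * max 1 r₁ ^ (-((d : ℝ) + α)) * φ w₀ with hKdef
  have hK : 0 < K := by
    have : (0:ℝ) < max 1 r₁ ^ (-((d : ℝ) + α)) :=
      Real.rpow_pos_of_pos (lt_of_lt_of_le one_pos (le_max_left _ _)) _
    positivity
  set c₃ : ℝ := Real.exp lam₁ * K * v with hc₃def
  have hc₃ : 0 < c₃ := by positivity
  -- STEP 1 : c₃ * ψ ≤ φ on D
  have hc3 : ∀ z ∈ D, c₃ * ψ z ≤ φ z := by
    intro z hz
    obtain ⟨A, hA⟩ := hball z hz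
    have hballD : ball A (κ * r₁) ⊆ D := fun u hu => (hA hu).2
    have hsub2 : ball A ρ ⊆ ball A (κ * r₁) := ball_subset_ball (by rw [hρdef]; nlinarith)
    have hball_subD : ball A ρ ⊆ D := fun u hu => hballD (hsub2 hu)
    have hlow : ∀ w ∈ ball A ρ, K * ψ z ≤ p 1 z w * φ w := by
      intro w hw
      have hwD : w ∈ D := hball_subD hw
      have hwd : ρ ≤ deltaD D w := by
        refine hdelta_ball w ρ ?_
        intro u hu
        apply hballD
        rw [mem_ball] at hu hw ⊢
        have := dist_triangle u w A
        linarith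
      have hzw : ‖z - w‖ < r₁ := by
        have hwz : w ∈ ball z r₁ := (hA (hsub2 hw)).1
        rw [mem_ball] at hwz
        rw [show ‖z - w‖ = dist z w from (dist_eq_norm z w).symm, dist_comm]
        exact hwz
      have hp := hb z hz w hwD hzw
      have hmax : max 1 r₁ ^ (-((d : ℝ) + α)) ≤ max 1 ‖z - w‖ ^ (-((d : ℝ) + α)) := by
        refine Real.rpow_le_rpow_of_nonpos (lt_of_lt_of_le one_pos (le_max_left _ _))
          (max_le_max le_rfl hzw.le) ?_
        have : (0:ℝ) ≤ (d : ℝ) := Nat.cast_nonneg d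
        linarith
      have hψw : m ≤ ψ w := hψS w hwd
      have hφw : φ w₀ ≤ φ w := (isMinOn_iff.mp hw₀min) w ⟨subset_closure hwD, hwd⟩
      have hφwpos : 0 < φ w := hφpos w hwD
      have hmaxpos : (0:ℝ) < max 1 ‖z - w‖ ^ (-((d : ℝ) + α)) :=
        Real.rpow_pos_of_pos (lt_of_lt_of_le one_pos (le_max_left _ _)) _
      have t1 : c₂ * m ≤ c₂ * ψ w := mul_le_mul_of_nonneg_left hψw hc₂.le
      have t2 : c₂ * m * max 1 r₁ ^ (-((d : ℝ) + α)) ≤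
          c₂ * ψ w * max 1 ‖z - w‖ ^ (-((d : ℝ) + α)) :=
        mul_le_mul t1 hmax
          (Real.rpow_nonneg (le_trans zero_le_one (le_max_left _ _)) _)
          (mul_nonneg hc₂.le (hψ0 w))
      have t3 : c₂ * m * max 1 r₁ ^ (-((d : ℝ) + α)) * φ w₀ ≤
          c₂ * ψ w * max 1 ‖z - w‖ ^ (-((d : ℝ) + α)) * φ w :=
        mul_le_mul t2 hφw hw₀pos.le
          (mul_nonneg (mul_nonneg hc₂.le (hψ0 w)) hmaxpos.le)
      have t4 := mul_le_mul_of_nonneg_right t3 (hψ0 z)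
      have step1 : K * ψ z ≤ c₂ * ψ z * ψ w * max 1 ‖z - w‖ ^ (-((d : ℝ) + α)) * φ w := by
        calc K * ψ z = c₂ * m * max 1 r₁ ^ (-((d : ℝ) + α)) * φ w₀ * ψ z := by
              rw [hKdef]
          _ ≤ c₂ * ψ w * max 1 ‖z - w‖ ^ (-((d : ℝ) + α)) * φ w * ψ z := t4
          _ = c₂ * ψ z * ψ w * max 1 ‖z - w‖ ^ (-((d : ℝ) + α)) * φ w := by ring
      calc K * ψ z ≤ c₂ * ψ z * ψ w * max 1 ‖z - w‖ ^ (-((d : ℝ) + α)) * φ w := step1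
        _ ≤ p 1 z w * φ w := mul_le_mul_of_nonneg_right hp hφwpos.le
    have hint : IntegrableOn (fun w => p 1 z w * φ w) D := heig_int 1 one_pos z hz
    have e1 : (∫ w in ball A ρ, p 1 z w * φ w) ≤ ∫ w in D, p 1 z w * φ w := by
      refine setIntegral_mono_set hint ?_ hball_subD.eventuallyLE
      refine (ae_restrict_iff' hDmeas).mpr (ae_of_all _ fun w hw => ?_)
      exact mul_nonneg (hnonneg 1 one_pos z w) (hφpos w hw).le
    have hveq : volume (ball A ρ) = volume (ball (0 : EuclideanSpace ℝ (Fin d)) ρ) := by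
      rw [show ball A ρ = A +ᵥ ball (0 : EuclideanSpace ℝ (Fin d)) ρ by
        rw [vadd_ball, vadd_eq_add, add_zero], measure_vadd]
    have e2 : K * ψ z * v ≤ ∫ w in ball A ρ, p 1 z w * φ w := by
      have hconst : (∫ _w in ball A ρ, K * ψ z) = K * ψ z * v := by
        rw [setIntegral_const, measureReal_def, hveq, smul_eq_mul, mul_comm]
      rw [← hconst]
      exact setIntegral_mono_on (integrableOn_const measure_ball_lt_top.ne)
        (hint.mono_set hball_subD) measurableSet_ball (fun w hw => hlow w hw)
    have he := heig 1 one_pos z hz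
    have hkey : K * ψ z * v ≤ Real.exp (-lam₁ * 1) * φ z := by
      rw [← he]; exact le_trans e2 e1
    have hexp : Real.exp lam₁ * Real.exp (-lam₁ * 1) = 1 := by
      rw [← Real.exp_add]; norm_num
    have := mul_le_mul_of_nonneg_left hkey (Real.exp_pos lam₁).le
    calc c₃ * ψ z = Real.exp lam₁ * (K * ψ z * v) := by rw [hc₃def]; ring
      _ ≤ Real.exp lam₁ * (Real.exp (-lam₁ * 1) * φ z) := this
      _ = φ z := by rw [← mul_assoc, hexp, one_mul]
  -- STEP 2 : φ ≤ c₄ * ψ on D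
  set Mφ : ℝ := ∫ y in D, φ y with hMdef
  have hMφ : 0 ≤ Mφ := setIntegral_nonneg hDmeas (fun y hy => (hφpos y hy).le)
  set c₄ : ℝ := Real.exp (lam₁ * (1 / 2)) * (c₁ * Mφ) with hc₄def
  have hc₄0 : 0 ≤ c₄ := mul_nonneg (Real.exp_pos _).le (mul_nonneg hc₁.le hMφ)
  have hc4 : ∀ x ∈ D, φ x ≤ c₄ * ψ x := by
    intro x hx
    have heq := heig (1 / 2) (by norm_num) x hx
    have hle : (∫ y in D, p (1 / 2) x y * φ y) ≤ ∫ y in D, c₁ * ψ x * φ y := by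
      refine setIntegral_mono_on (heig_int (1 / 2) (by norm_num) x hx)
        (hφint.const_mul _) hDmeas (fun y hy => ?_)
      have hay := ha x hx y hy
      have hφy := (hφpos y hy).le
      calc p (1 / 2) x y * φ y ≤ c₁ * ψ x * ψ y * φ y :=
            mul_le_mul_of_nonneg_right hay hφy
        _ ≤ c₁ * ψ x * φ y := by
            have : ψ y * φ y ≤ φ y := mul_le_of_le_one_left hφy (hψ1 y)
            have h0 : 0 ≤ c₁ * ψ x := mul_nonneg hc₁.le (hψ0 x)
            calc c₁ * ψ x * ψ y * φ y = c₁ * ψ x * (ψ y * φ y) := by ring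
              _ ≤ c₁ * ψ x * φ y := mul_le_mul_of_nonneg_left this h0
    rw [MeasureTheory.integral_const_mul] at hle
    rw [heq] at hle
    have hexp : Real.exp (lam₁ * (1 / 2)) * Real.exp (-lam₁ * (1 / 2)) = 1 := by
      rw [← Real.exp_add]; norm_num
    have := mul_le_mul_of_nonneg_left hle (Real.exp_pos (lam₁ * (1 / 2))).le
    calc φ x = Real.exp (lam₁ * (1 / 2)) * (Real.exp (-lam₁ * (1 / 2)) * φ x) := by
          rw [← mul_assoc, hexp, one_mul]
      _ ≤ Real.exp (lam₁ * (1 / 2)) * (c₁ * ψ x * Mφ) := this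
      _ = c₄ * ψ x := by rw [hc₄def]; ring
  -- STEP 3 : conclusion
  set B : ℝ := c₁ / c₃ * Real.exp (lam₁ * (1 / 2)) * c₄ with hBdef
  have hB0 : 0 ≤ B :=
    mul_nonneg (mul_nonneg (div_nonneg hc₁.le hc₃.le) (Real.exp_pos _).le) hc₄0
  refine ⟨B + 1, by positivity, ?_⟩
  intro t ht x hx y hy
  have hs : (0:ℝ) < t - 1 / 2 := by linarith
  have hsemi' := hsemi (1 / 2) (by norm_num) (t - 1 / 2) hs x hx y hy
  rw [show t - 1 / 2 + 1 / 2 = t by ring] at hsemi'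
  have hint : IntegrableOn (fun z => p (t - 1 / 2) x z * φ z) D := heig_int _ hs x hx
  have hgint : IntegrableOn (fun z => c₁ * ψ y / c₃ * (p (t - 1 / 2) x z * φ z)) D :=
    hint.const_mul _
  have hfmeas : Measurable (fun z => p (t - 1 / 2) x z * p (1 / 2) z y) :=
    (hp_sect _ hs x).mul (hp_sect' (1 / 2) (by norm_num) y)
  have hfle : ∀ z ∈ D, p (t - 1 / 2) x z * p (1 / 2) z y ≤
      c₁ * ψ y / c₃ * (p (t - 1 / 2) x z * φ z) := by
    intro z hz
    have h1 := ha z hz y hy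
    have h2 := hc3 z hz
    have hp1 := hnonneg (t - 1 / 2) hs x z
    have hcoef : 0 ≤ c₁ * ψ y / c₃ := div_nonneg (mul_nonneg hc₁.le (hψ0 y)) hc₃.le
    have h3 : c₁ * ψ z * ψ y ≤ c₁ * ψ y / c₃ * φ z := by
      have := mul_le_mul_of_nonneg_left h2 hcoef
      calc c₁ * ψ z * ψ y = c₁ * ψ y / c₃ * (c₃ * ψ z) := by
            field_simp
        _ ≤ c₁ * ψ y / c₃ * φ z := this
    calc p (t - 1 / 2) x z * p (1 / 2) z y
        ≤ p (t - 1 / 2) x z * (c₁ * ψ z * ψ y) := mul_le_mul_of_nonneg_left h1 hp1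
      _ ≤ p (t - 1 / 2) x z * (c₁ * ψ y / c₃ * φ z) := mul_le_mul_of_nonneg_left h3 hp1
      _ = c₁ * ψ y / c₃ * (p (t - 1 / 2) x z * φ z) := by ring
  have hfint : IntegrableOn (fun z => p (t - 1 / 2) x z * p (1 / 2) z y) D := by
    refine Integrable.mono' hgint hfmeas.aestronglyMeasurable ?_
    refine (ae_restrict_iff' hDmeas).mpr (ae_of_all _ fun z hz => ?_)
    rw [Real.norm_eq_abs, abs_of_nonneg
      (mul_nonneg (hnonneg _ hs x z) (hnonneg _ (by norm_num) z y))]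
    exact hfle z hz
  have hIle : (∫ z in D, p (t - 1 / 2) x z * p (1 / 2) z y) ≤
      ∫ z in D, c₁ * ψ y / c₃ * (p (t - 1 / 2) x z * φ z) :=
    setIntegral_mono_on hfint hgint hDmeas hfle
  rw [MeasureTheory.integral_const_mul, heig _ hs x hx] at hIle
  have hfinal : p t x y ≤ c₁ * ψ y / c₃ * (Real.exp (-lam₁ * (t - 1 / 2)) * φ x) := by
    rw [hsemi']; exact hIle
  have hφx := hc4 x hx
  have hcoef : 0 ≤ c₁ * ψ y / c₃ * Real.exp (-lam₁ * (t - 1 / 2)) :=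
    mul_nonneg (div_nonneg (mul_nonneg hc₁.le (hψ0 y)) hc₃.le) (Real.exp_pos _).le
  have hfinal2 : p t x y ≤ c₁ * ψ y / c₃ * Real.exp (-lam₁ * (t - 1 / 2)) * (c₄ * ψ x) := by
    calc p t x y ≤ c₁ * ψ y / c₃ * (Real.exp (-lam₁ * (t - 1 / 2)) * φ x) := hfinal
      _ = c₁ * ψ y / c₃ * Real.exp (-lam₁ * (t - 1 / 2)) * φ x := by ring
      _ ≤ c₁ * ψ y / c₃ * Real.exp (-lam₁ * (t - 1 / 2)) * (c₄ * ψ x) := by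
          exact mul_le_mul_of_nonneg_left hφx hcoef
  have hexp : Real.exp (-lam₁ * (t - 1 / 2)) =
      Real.exp (lam₁ * (1 / 2)) * Real.exp (-lam₁ * t) := by
    rw [← Real.exp_add]; ring_nf
  have hfinal3 : p t x y ≤ B * Real.exp (-lam₁ * t) * ψ x * ψ y := by
    calc p t x y ≤ c₁ * ψ y / c₃ * Real.exp (-lam₁ * (t - 1 / 2)) * (c₄ * ψ x) := hfinal2
      _ = B * Real.exp (-lam₁ * t) * ψ x * ψ y := by
          rw [hexp, hBdef]; ring
  have hrest : 0 ≤ Real.exp (-lam₁ * t) * ψ x * ψ y := by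
    have := hψ0 x; have := hψ0 y; positivity
  calc p t x y ≤ B * Real.exp (-lam₁ * t) * ψ x * ψ y := hfinal3
    _ ≤ (B + 1) * Real.exp (-lam₁ * t) * ψ x * ψ y := by nlinarith
end
end

section
/- Let D ⊂ ℝ^d be a bounded open set, α > 0, and let p : (0,∞) × D × D → [0,∞) be measurable with the semigroup property. Suppose there are constants c₀, c₁ > 0 such that for all x, y ∈ D: c₀·min(1, δ_D(x)^{α/2})·min(1, δ_D(y)^{α/2}) ≤ p(1,x,y) and p(1,x,y) ≤ c₁·min(1, δ_D(x)^{α/2}). Let λ₁ ≥ 0 and let φ : D → (0,∞) be measurable with ∫_D φ² dx = 1 and ∫_D p(t,x,y) φ(y) dy = e^{−λ₁ t} φ(x) for all t > 0 and x ∈ D. Then there exists a constant c ≥ 1 such that e^{λ₁} ≤ c and c^{−1}·min(1, δ_D(x)^{α/2}) ≤ φ(x) ≤ c·min(1, δ_D(x)^{α/2}) for every x ∈ D. -/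
open MeasureTheory Metric Set

noncomputable section

set_option maxHeartbeats 1000000 in
/-- two-sided boundary decay of the principal eigenfunction, and bound on
the principal eigenvalue. -/
theorem eigenfunction_boundary_decay (d : ℕ) (D : Set (EuclideanSpace ℝ (Fin d)))
    (hD : IsOpen D) (hDbdd : Bornology.IsBounded D) (α : ℝ) (hα : 0 < α)
    (p : ℝ → EuclideanSpace ℝ (Fin d) → EuclideanSpace ℝ (Fin d) → ℝ)
    (hmeas : ∀ t > 0, Measurable (Function.uncurry (p t)))
    (hnonneg : ∀ t > 0, ∀ x y, 0 ≤ p t x y)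
    (hsemi : ∀ s > 0, ∀ t > 0, ∀ x ∈ D, ∀ y ∈ D,
      p (t + s) x y = ∫ z in D, p t x z * p s z y)
    (c₀ c₁ : ℝ) (hc₀ : 0 < c₀) (hc₁ : 0 < c₁)
    (hlow : ∀ x ∈ D, ∀ y ∈ D,
      c₀ * min 1 (deltaD D x ^ (α / 2)) * min 1 (deltaD D y ^ (α / 2)) ≤ p 1 x y)
    (hupp : ∀ x ∈ D, ∀ y ∈ D, p 1 x y ≤ c₁ * min 1 (deltaD D x ^ (α / 2)))
    (lam₁ : ℝ) (hlam₁ : 0 ≤ lam₁)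
    (φ : EuclideanSpace ℝ (Fin d) → ℝ) (hφmeas : Measurable φ)
    (hφpos : ∀ x ∈ D, 0 < φ x) (hφnorm : (∫ x in D, φ x ^ 2) = 1)
    (heig : ∀ t > 0, ∀ x ∈ D, (∫ y in D, p t x y * φ y) = Real.exp (-lam₁ * t) * φ x) :
    ∃ c ≥ 1, Real.exp lam₁ ≤ c ∧
      ∀ x ∈ D, c⁻¹ * min 1 (deltaD D x ^ (α / 2)) ≤ φ x ∧
        φ x ≤ c * min 1 (deltaD D x ^ (α / 2)) := by
  set w : EuclideanSpace ℝ (Fin d) → ℝ := fun x => min 1 (deltaD D x ^ (α / 2)) with hw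
  set E : ℝ := Real.exp lam₁ with hE
  have hEpos : 0 < E := Real.exp_pos _
  have hE1 : 1 ≤ E := Real.one_le_exp hlam₁
  have hw0 : ∀ x, 0 ≤ w x := fun x =>
    le_min zero_le_one (Real.rpow_nonneg (Metric.infDist_nonneg) _)
  have hw1 : ∀ x, w x ≤ 1 := fun x => min_le_left _ _
  have hwmeas : Measurable w :=
    (continuous_const.min ((continuous_infDist_pt (frontier D)).rpow_const
      fun x => Or.inr (by positivity))).measurable
  have hDmeas : MeasurableSet D := hD.measurableSet
  have hDfin : volume D < ⊤ := hDbdd.measure_lt_top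
  -- integrability of φ², φ, w·φ on D
  have hφ2 : IntegrableOn (fun x => φ x ^ 2) D := by
    by_contra h
    rw [MeasureTheory.integral_undef h] at hφnorm
    norm_num at hφnorm
  have hconst : IntegrableOn (fun _ : EuclideanSpace ℝ (Fin d) => (1 : ℝ)) D := by
    exact integrableOn_const hDfin.ne
  have hφint : IntegrableOn φ D := by
    apply Integrable.mono' (hconst.add hφ2) hφmeas.aestronglyMeasurable
    filter_upwards with x
    have h1 : ‖φ x‖ = |φ x| := Real.norm_eq_abs _
    rw [h1]
    simp only [Pi.add_apply]
    nlinarith [sq_abs (φ x), sq_nonneg (|φ x| - 1), abs_nonneg (φ x)]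
  have hwφ : IntegrableOn (fun x => w x * φ x) D := by
    apply Integrable.mono' hφint.abs ((hwmeas.mul hφmeas).aestronglyMeasurable)
    filter_upwards with x
    rw [Real.norm_eq_abs, Pi.mul_apply, abs_mul]
    have : |w x| ≤ 1 := abs_le.mpr ⟨by linarith [hw0 x], hw1 x⟩
    nlinarith [abs_nonneg (φ x), abs_nonneg (w x)]
  set I : ℝ := ∫ x in D, w x * φ x with hI
  set M : ℝ := ∫ x in D, φ x with hM
  have hI0 : 0 ≤ I :=
    setIntegral_nonneg hDmeas fun x hx => mul_nonneg (hw0 x) (hφpos x hx).le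
  have hM0 : 0 ≤ M := setIntegral_nonneg hDmeas fun x hx => (hφpos x hx).le
  -- pointwise two-sided bounds from the eigenvalue equation at t = 1
  have key : ∀ x ∈ D,
      c₀ * I * w x ≤ E⁻¹ * φ x ∧ E⁻¹ * φ x ≤ c₁ * M * w x := by
    intro x hx
    have heq := heig 1 one_pos x hx
    rw [mul_one, Real.exp_neg] at heq
    have hpy_meas : Measurable fun y => p 1 x y :=
      (hmeas 1 one_pos).comp (measurable_prodMk_left)
    have hg_int : IntegrableOn (fun y => p 1 x y * φ y) D := by
      apply Integrable.mono' (hφint.abs.const_mul c₁)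
        ((hpy_meas.mul hφmeas).aestronglyMeasurable)
      rw [ae_restrict_iff' hDmeas]
      filter_upwards with y hy
      have h1 := hupp x hx y hy
      have h2 := hnonneg 1 one_pos x y
      have h3 := (hφpos y hy).le
      have h4 : c₁ * w x ≤ c₁ := by nlinarith [hw1 x, hw0 x]
      rw [Real.norm_eq_abs, Pi.mul_apply, abs_of_nonneg (mul_nonneg h2 h3), abs_of_nonneg h3]
      nlinarith
    constructor
    · have hmono : (∫ y in D, (c₀ * w x) * (w y * φ y)) ≤ ∫ y in D, p 1 x y * φ y := by
        apply setIntegral_mono_on (hwφ.const_mul _) hg_int hDmeas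
        intro y hy
        have h1 := hlow x hx y hy
        have h3 := (hφpos y hy).le
        nlinarith
      rw [integral_const_mul, heq] at hmono
      nlinarith [hw0 x]
    · have hmono : (∫ y in D, p 1 x y * φ y) ≤ ∫ y in D, (c₁ * w x) * φ y := by
        apply setIntegral_mono_on hg_int (hφint.const_mul _) hDmeas
        intro y hy
        have h1 := hupp x hx y hy
        have h3 := (hφpos y hy).le
        nlinarith
      rw [integral_const_mul, heq] at hmono
      nlinarith
  -- integrate the pointwise bounds against φ
  have hlowint : c₀ * I * I ≤ E⁻¹ := by
    have hmono : (∫ x in D, (c₀ * I) * (w x * φ x)) ≤ ∫ x in D, E⁻¹ * φ x ^ 2 := by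
      apply setIntegral_mono_on (hwφ.const_mul _) (hφ2.const_mul _) hDmeas
      intro x hx
      have h1 := (key x hx).1
      have h3 := (hφpos x hx).le
      nlinarith
    rw [integral_const_mul, integral_const_mul, hφnorm] at hmono
    nlinarith
  have huppint : E⁻¹ ≤ c₁ * M * I := by
    have hmono : (∫ x in D, E⁻¹ * φ x ^ 2) ≤ ∫ x in D, (c₁ * M) * (w x * φ x) := by
      apply setIntegral_mono_on (hφ2.const_mul _) (hwφ.const_mul _) hDmeas
      intro x hx
      have h1 := (key x hx).2
      have h3 := (hφpos x hx).le
      nlinarith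
    rw [integral_const_mul, integral_const_mul, hφnorm] at hmono
    nlinarith
  have hEinv : 0 < E⁻¹ := inv_pos.mpr hEpos
  have hIpos : 0 < I := by nlinarith [mul_nonneg hc₁.le hM0]
  have hMpos : 0 < M := by nlinarith [mul_pos hc₁ hIpos]
  set B : ℝ := (c₀ * I * I)⁻¹ with hB
  have hc0I2 : 0 < c₀ * I * I := by positivity
  have hEB : E ≤ B := by
    rw [hB, ← inv_inv E]
    exact inv_anti₀ (by positivity) hlowint
  have hB0 : 0 < B := by positivity
  refine ⟨max (max 1 B) (max (c₀ * I)⁻¹ (B * (c₁ * M))), ?_, ?_, ?_⟩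
  · exact le_max_of_le_left (le_max_left _ _)
  · exact le_trans hEB (le_max_of_le_left (le_max_right _ _))
  · intro x hx
    set c : ℝ := max (max 1 B) (max (c₀ * I)⁻¹ (B * (c₁ * M))) with hc
    have hcpos : 0 < c := lt_of_lt_of_le one_pos (le_max_of_le_left (le_max_left _ _))
    have hk := key x hx
    constructor
    · have hcinv : c⁻¹ ≤ c₀ * I := by
        rw [← inv_inv (c₀ * I)]
        exact inv_anti₀ (by positivity) (le_max_of_le_right (le_max_left _ _))
      have h1 : c₀ * I * w x ≤ E⁻¹ * φ x := hk.1
      have h2 : E⁻¹ * φ x ≤ φ x := by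
        have hle : E⁻¹ ≤ 1 := inv_le_one_of_one_le₀ hE1
        have := mul_le_mul_of_nonneg_right hle (hφpos x hx).le
        linarith
      calc c⁻¹ * w x ≤ c₀ * I * w x := mul_le_mul_of_nonneg_right hcinv (hw0 x)
        _ ≤ E⁻¹ * φ x := h1
        _ ≤ φ x := h2
    · have h1 : φ x ≤ E * (c₁ * M * w x) := by
        have := hk.2
        have h := mul_le_mul_of_nonneg_left hk.2 hEpos.le
        rw [← mul_assoc, mul_inv_cancel₀ hEpos.ne', one_mul] at h
        linarith
      have h2 : E * (c₁ * M * w x) ≤ B * (c₁ * M) * w x := by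
        have hcM : (0:ℝ) ≤ c₁ * M := mul_nonneg hc₁.le hM0
        have hEcM : E * (c₁ * M) ≤ B * (c₁ * M) :=
          mul_le_mul_of_nonneg_right hEB hcM
        have := mul_le_mul_of_nonneg_right hEcM (hw0 x)
        linarith [this, mul_assoc E (c₁ * M) (w x)]
      have h3 : B * (c₁ * M) * w x ≤ c * w x :=
        mul_le_mul_of_nonneg_right (le_max_of_le_right (le_max_right _ _)) (hw0 x)
      calc φ x ≤ E * (c₁ * M * w x) := h1
        _ ≤ B * (c₁ * M) * w x := h2
        _ ≤ c * w x := h3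
end
end

section
/- Let d ≥ 2, α ∈ (0,2), T > 0, and let D ⊂ ℝ^d be a bounded open set. Define f_D(t,x,y) := min(1, δ_D(x)^{α/2}/√t)·min(1, δ_D(y)^{α/2}/√t)·min(t^{−d/α}, t/|x−y|^{d+α}). Let p : (0,∞) × D × D → [0,∞) be measurable with the semigroup property, and suppose there is a constant c ≥ 1 with c^{−1}·f_D(t,x,y) ≤ p(t,x,y) ≤ c·f_D(t,x,y) for all t ∈ (0, max(T,3)] and all x, y ∈ D. Suppose further there exist λ₁ > 0 and a measurable φ : D → (0,∞) with ∫_D φ² dx = 1 and ∫_D p(t,x,y) φ(y) dy = e^{−λ₁ t} φ(x) for all t > 0 and x ∈ D. Then there exists a constant C ≥ 1 such that for all t ≥ T and all x, y ∈ D: C^{−1}·e^{−λ₁ t}·δ_D(x)^{α/2}·δ_D(y)^{α/2} ≤ p(t,x,y) ≤ C·e^{−λ₁ t}·δ_D(x)^{α/2}·δ_D(y)^{α/2}. -/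
open MeasureTheory Metric Set

noncomputable section

/-- the function `f_D(t,x,y)` appearing in the small time two-sided Dirichlet heat kernel
estimates; `t/|x-y|^{d+α}` is interpreted as `+∞` when `x = y`. -/
def fKer {d : ℕ} (α : ℝ) (D : Set (EuclideanSpace ℝ (Fin d)))
    (t : ℝ) (x y : EuclideanSpace ℝ (Fin d)) : ℝ :=
  min 1 (deltaD D x ^ (α / 2) / Real.sqrt t) * min 1 (deltaD D y ^ (α / 2) / Real.sqrt t) *
    (if ‖x - y‖ = 0 then t ^ (-(d : ℝ) / α)
     else min (t ^ (-(d : ℝ) / α)) (t / ‖x - y‖ ^ ((d : ℝ) + α)))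

private lemma aux_min_one {a M : ℝ} (hM : 1 ≤ M) (ha : 0 ≤ a) (haM : a ≤ M) :
    a / M ≤ min 1 a :=
  le_min (by rw [div_le_one (by linarith)]; exact haM) (div_le_self ha hM)

private lemma deltaD_nonneg {d : ℕ} (D : Set (EuclideanSpace ℝ (Fin d)))
    (x : EuclideanSpace ℝ (Fin d)) : 0 ≤ deltaD D x := Metric.infDist_nonneg

private lemma fKer_upper {d : ℕ} {α : ℝ} {D : Set (EuclideanSpace ℝ (Fin d))}
    {t : ℝ} (ht : 0 < t) (x y : EuclideanSpace ℝ (Fin d)) :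
    fKer α D t x y ≤
      deltaD D x ^ (α / 2) * deltaD D y ^ (α / 2) * (t⁻¹ * t ^ (-(d : ℝ) / α)) := by
  have hst : 0 < Real.sqrt t := Real.sqrt_pos.mpr ht
  have hgx : 0 ≤ deltaD D x ^ (α / 2) := Real.rpow_nonneg (deltaD_nonneg D x) _
  have hgy : 0 ≤ deltaD D y ^ (α / 2) := Real.rpow_nonneg (deltaD_nonneg D y) _
  have htp : 0 ≤ t ^ (-(d : ℝ) / α) := Real.rpow_nonneg ht.le _
  rw [fKer]
  have h3 : (if ‖x - y‖ = 0 then t ^ (-(d : ℝ) / α)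
      else min (t ^ (-(d : ℝ) / α)) (t / ‖x - y‖ ^ ((d : ℝ) + α))) ≤ t ^ (-(d : ℝ) / α) := by
    split
    · exact le_rfl
    · exact min_le_left _ _
  have h30 : 0 ≤ (if ‖x - y‖ = 0 then t ^ (-(d : ℝ) / α)
      else min (t ^ (-(d : ℝ) / α)) (t / ‖x - y‖ ^ ((d : ℝ) + α))) := by
    split
    · exact htp
    · exact le_min htp (div_nonneg ht.le (Real.rpow_nonneg (norm_nonneg _) _))
  have hAB : min 1 (deltaD D x ^ (α / 2) / Real.sqrt t) *
      min 1 (deltaD D y ^ (α / 2) / Real.sqrt t) ≤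
      (deltaD D x ^ (α / 2) / Real.sqrt t) * (deltaD D y ^ (α / 2) / Real.sqrt t) := by
    apply mul_le_mul (min_le_right _ _) (min_le_right _ _)
      (le_min (by norm_num) (by positivity)) (by positivity)
  calc min 1 (deltaD D x ^ (α / 2) / Real.sqrt t) * min 1 (deltaD D y ^ (α / 2) / Real.sqrt t) *
        (if ‖x - y‖ = 0 then t ^ (-(d : ℝ) / α)
          else min (t ^ (-(d : ℝ) / α)) (t / ‖x - y‖ ^ ((d : ℝ) + α)))
      ≤ (deltaD D x ^ (α / 2) / Real.sqrt t) * (deltaD D y ^ (α / 2) / Real.sqrt t) *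
          (t ^ (-(d : ℝ) / α)) := by
        apply mul_le_mul hAB h3 h30 (by positivity)
    _ = deltaD D x ^ (α / 2) * deltaD D y ^ (α / 2) *
          ((Real.sqrt t * Real.sqrt t)⁻¹ * t ^ (-(d : ℝ) / α)) := by ring
    _ = deltaD D x ^ (α / 2) * deltaD D y ^ (α / 2) * (t⁻¹ * t ^ (-(d : ℝ) / α)) := by
        rw [Real.mul_self_sqrt ht.le]

private lemma fKer_lower {d : ℕ} {α : ℝ} (hα : 0 < α) {D : Set (EuclideanSpace ℝ (Fin d))}
    {t t₁ t₂ M₁ M₂ : ℝ} (ht₁ : 0 < t₁) (htl : t₁ ≤ t) (htu : t ≤ t₂)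
    (hM₁ : 1 ≤ M₁) (hM₂ : 1 ≤ M₂) {x y : EuclideanSpace ℝ (Fin d)}
    (hgx : deltaD D x ^ (α / 2) ≤ M₁) (hgy : deltaD D y ^ (α / 2) ≤ M₁)
    (hxy : ‖x - y‖ ≤ M₂) :
    deltaD D x ^ (α / 2) * deltaD D y ^ (α / 2) *
      ((Real.sqrt t₂ * max 1 (M₁ / Real.sqrt t₁))⁻¹ ^ 2 *
        min (t₂ ^ (-(d : ℝ) / α)) (t₁ / M₂ ^ ((d : ℝ) + α))) ≤ fKer α D t x y := by
  have ht : 0 < t := ht₁.trans_le htl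
  have ht₂ : 0 < t₂ := ht.trans_le htu
  have hst : 0 < Real.sqrt t := Real.sqrt_pos.mpr ht
  have hst₁ : 0 < Real.sqrt t₁ := Real.sqrt_pos.mpr ht₁
  have hst₂ : 0 < Real.sqrt t₂ := Real.sqrt_pos.mpr ht₂
  have hstle : Real.sqrt t₁ ≤ Real.sqrt t := Real.sqrt_le_sqrt htl
  have hstle₂ : Real.sqrt t ≤ Real.sqrt t₂ := Real.sqrt_le_sqrt htu
  set M₃ := max 1 (M₁ / Real.sqrt t₁) with hM₃def
  have hM₃ : 1 ≤ M₃ := le_max_left _ _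
  have hM₃0 : 0 < M₃ := by linarith
  have hgx0 : 0 ≤ deltaD D x ^ (α / 2) := Real.rpow_nonneg (deltaD_nonneg D x) _
  have hgy0 : 0 ≤ deltaD D y ^ (α / 2) := Real.rpow_nonneg (deltaD_nonneg D y) _
  have hexp : -(d : ℝ) / α ≤ 0 :=
    div_nonpos_of_nonpos_of_nonneg (neg_nonpos.mpr (by positivity)) hα.le
  have F1 : ∀ g : ℝ, 0 ≤ g → g ≤ M₁ →
      g / (Real.sqrt t₂ * M₃) ≤ min 1 (g / Real.sqrt t) := by
    intro g hg0 hgM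
    have h1 : g / Real.sqrt t ≤ M₃ := by
      refine le_trans ?_ (le_max_right 1 (M₁ / Real.sqrt t₁))
      gcongr
    have h2 := aux_min_one hM₃ (by positivity) h1
    refine le_trans ?_ h2
    rw [div_div]
    gcongr
  have F3 : min (t₂ ^ (-(d : ℝ) / α)) (t₁ / M₂ ^ ((d : ℝ) + α)) ≤
      (if ‖x - y‖ = 0 then t ^ (-(d : ℝ) / α)
        else min (t ^ (-(d : ℝ) / α)) (t / ‖x - y‖ ^ ((d : ℝ) + α))) := by
    have hA : t₂ ^ (-(d : ℝ) / α) ≤ t ^ (-(d : ℝ) / α) :=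
      Real.rpow_le_rpow_of_nonpos ht htu hexp
    split
    · exact le_trans (min_le_left _ _) hA
    · rename_i hxy0
      refine le_min (le_trans (min_le_left _ _) hA) ?_
      have hnxy : 0 < ‖x - y‖ := lt_of_le_of_ne (norm_nonneg _) (Ne.symm hxy0)
      have hpow : ‖x - y‖ ^ ((d : ℝ) + α) ≤ M₂ ^ ((d : ℝ) + α) :=
        Real.rpow_le_rpow (norm_nonneg _) hxy (by positivity)
      have hpow0 : 0 < ‖x - y‖ ^ ((d : ℝ) + α) := Real.rpow_pos_of_pos hnxy _
      calc min (t₂ ^ (-(d : ℝ) / α)) (t₁ / M₂ ^ ((d : ℝ) + α))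
          ≤ t₁ / M₂ ^ ((d : ℝ) + α) := min_le_right _ _
        _ ≤ t / ‖x - y‖ ^ ((d : ℝ) + α) := by gcongr
  have hmin0 : 0 ≤ min (t₂ ^ (-(d : ℝ) / α)) (t₁ / M₂ ^ ((d : ℝ) + α)) :=
    le_min (Real.rpow_nonneg ht₂.le _) (div_nonneg ht₁.le (Real.rpow_nonneg (by linarith) _))
  have hAB := mul_le_mul (F1 _ hgx0 hgx) (F1 _ hgy0 hgy) (by positivity)
    (le_min (by norm_num) (by positivity))
  rw [fKer]
  calc deltaD D x ^ (α / 2) * deltaD D y ^ (α / 2) *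
        ((Real.sqrt t₂ * M₃)⁻¹ ^ 2 * min (t₂ ^ (-(d : ℝ) / α)) (t₁ / M₂ ^ ((d : ℝ) + α)))
      = (deltaD D x ^ (α / 2) / (Real.sqrt t₂ * M₃)) *
          (deltaD D y ^ (α / 2) / (Real.sqrt t₂ * M₃)) *
          min (t₂ ^ (-(d : ℝ) / α)) (t₁ / M₂ ^ ((d : ℝ) + α)) := by ring
    _ ≤ min 1 (deltaD D x ^ (α / 2) / Real.sqrt t) *
          min 1 (deltaD D y ^ (α / 2) / Real.sqrt t) *
          (if ‖x - y‖ = 0 then t ^ (-(d : ℝ) / α)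
            else min (t ^ (-(d : ℝ) / α)) (t / ‖x - y‖ ^ ((d : ℝ) + α))) := by
        apply mul_le_mul hAB F3 hmin0
        exact mul_nonneg (le_min (by norm_num) (by positivity))
          (le_min (by norm_num) (by positivity))

set_option maxHeartbeats 2000000 in
/-- two-sided large time estimate
`p(t,x,y) ≍ e^{-λ₁ t} δ_D(x)^{α/2} δ_D(y)^{α/2}` for `t ≥ T`. -/
theorem two_sided_large_time_estimate (d : ℕ) (hd : 2 ≤ d) (α T : ℝ)
    (hα0 : 0 < α) (hα2 : α < 2) (hT : 0 < T)
    (D : Set (EuclideanSpace ℝ (Fin d))) (hD : IsOpen D) (hDbdd : Bornology.IsBounded D)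
    (p : ℝ → EuclideanSpace ℝ (Fin d) → EuclideanSpace ℝ (Fin d) → ℝ)
    (hmeas : ∀ t > 0, Measurable (Function.uncurry (p t)))
    (hnonneg : ∀ t > 0, ∀ x y, 0 ≤ p t x y)
    (hsemi : ∀ s > 0, ∀ t > 0, ∀ x ∈ D, ∀ y ∈ D,
      p (t + s) x y = ∫ z in D, p t x z * p s z y)
    (c : ℝ) (hc : 1 ≤ c)
    (hcomp : ∀ t : ℝ, 0 < t → t ≤ max T 3 → ∀ x ∈ D, ∀ y ∈ D,
      c⁻¹ * fKer α D t x y ≤ p t x y ∧ p t x y ≤ c * fKer α D t x y)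
    (lam₁ : ℝ) (hlam₁ : 0 < lam₁)
    (φ : EuclideanSpace ℝ (Fin d) → ℝ) (hφmeas : Measurable φ)
    (hφpos : ∀ x ∈ D, 0 < φ x) (hφnorm : (∫ x in D, φ x ^ 2) = 1)
    (heig : ∀ t > 0, ∀ x ∈ D, (∫ y in D, p t x y * φ y) = Real.exp (-lam₁ * t) * φ x) :
    ∃ C ≥ 1, ∀ t ≥ T, ∀ x ∈ D, ∀ y ∈ D,
      C⁻¹ * Real.exp (-lam₁ * t) * deltaD D x ^ (α / 2) * deltaD D y ^ (α / 2) ≤ p t x y ∧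
      p t x y ≤ C * Real.exp (-lam₁ * t) * deltaD D x ^ (α / 2) * deltaD D y ^ (α / 2) := by
  have hc0 : 0 < c := by linarith
  have hDmeas : MeasurableSet D := hD.measurableSet
  have hvolD : volume D < ⊤ := hDbdd.measure_lt_top
  -- D is nonempty
  have hμD : volume D ≠ 0 := by
    intro h0
    rw [Measure.restrict_eq_zero.mpr h0, integral_zero_measure] at hφnorm
    norm_num at hφnorm
  have hDne : D.Nonempty := by
    rcases eq_empty_or_nonempty D with h | h
    · exact absurd (by simp [h]) hμD
    · exact h
  -- the frontier is nonempty
  have hfr : (frontier D).Nonempty := by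
    rcases eq_empty_or_nonempty (frontier D) with h | h
    · exfalso
      have hclopen : IsClopen D := isClopen_iff_frontier_eq_empty.mpr h
      have : Nontrivial (EuclideanSpace ℝ (Fin d)) := by
        refine ⟨EuclideanSpace.single (⟨0, by omega⟩ : Fin d) (1 : ℝ), 0, ?_⟩
        intro hcon
        have := congrArg (fun v : EuclideanSpace ℝ (Fin d) => v (⟨0, by omega⟩ : Fin d)) hcon
        simp [EuclideanSpace.single] at this
      rcases isClopen_iff.mp hclopen with rfl | rfl
      · exact hDne.ne_empty rfl
      · exact NormedSpace.unbounded_univ ℝ _ hDbdd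
    · exact h
  -- distance facts
  have hδ0 : ∀ x, 0 ≤ deltaD D x := fun x => Metric.infDist_nonneg
  have hδpos : ∀ x ∈ D, 0 < deltaD D x := by
    intro x hx
    rw [deltaD, ← isClosed_frontier.notMem_iff_infDist_pos hfr]
    simp only [frontier, mem_diff]
    intro hmem
    exact hmem.2 (by rwa [hD.interior_eq])
  have hg0 : ∀ x, 0 ≤ deltaD D x ^ (α / 2) := fun x => Real.rpow_nonneg (hδ0 x) _
  have hgpos : ∀ x ∈ D, 0 < deltaD D x ^ (α / 2) :=
    fun x hx => Real.rpow_pos_of_pos (hδpos x hx) _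
  -- geometric constants
  obtain ⟨R₀, hR₀⟩ := (Metric.isBounded_iff_subset_closedBall 0).mp hDbdd
  set R : ℝ := max R₀ 1 with hRdef
  have hR1 : 1 ≤ R := le_max_right _ _
  have hsub : D ⊆ closedBall 0 R :=
    hR₀.trans (closedBall_subset_closedBall (le_max_left _ _))
  set M₂ : ℝ := 2 * R with hM₂def
  have hM₂ : 1 ≤ M₂ := by linarith
  have hM₂0 : 0 < M₂ := by linarith
  have hxyM : ∀ x ∈ D, ∀ y ∈ D, ‖x - y‖ ≤ M₂ := by
    intro x hx y hy
    have h1 : dist x 0 ≤ R := hsub hx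
    have h2 : dist y 0 ≤ R := hsub hy
    calc ‖x - y‖ = dist x y := (dist_eq_norm x y).symm
      _ ≤ dist x 0 + dist 0 y := dist_triangle _ _ _
      _ ≤ R + R := by rw [dist_comm 0 y]; linarith
      _ = M₂ := by rw [hM₂def]; ring
  have hδle : ∀ x ∈ D, deltaD D x ≤ M₂ := by
    intro x hx
    obtain ⟨z, hz⟩ := hfr
    have hzR : dist z 0 ≤ R :=
      (Metric.isClosed_closedBall.closure_subset_iff.mpr hsub) (frontier_subset_closure hz)
    have hxr : dist x 0 ≤ R := hsub hx
    refine le_trans (Metric.infDist_le_dist_of_mem hz) ?_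
    calc dist x z ≤ dist x 0 + dist 0 z := dist_triangle _ _ _
      _ ≤ R + R := by rw [dist_comm 0 z]; linarith
      _ = M₂ := by rw [hM₂def]; ring
  set M₁ : ℝ := M₂ ^ (α / 2) with hM₁def
  have hM₁ : 1 ≤ M₁ := Real.one_le_rpow hM₂ (by positivity)
  have hgle : ∀ x ∈ D, deltaD D x ^ (α / 2) ≤ M₁ :=
    fun x hx => Real.rpow_le_rpow (hδ0 x) (hδle x hx) (by positivity)
  -- time constants
  set Tm : ℝ := max T 3 with hTmdef
  have hTmT : T ≤ Tm := le_max_left _ _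
  have hTm3 : (3 : ℝ) ≤ Tm := le_max_right _ _
  have hTm0 : 0 < Tm := by linarith
  have h1Tm : (1 : ℝ) ≤ Tm := by linarith
  -- the comparison constants
  set A₁ : ℝ := (Real.sqrt 1 * max 1 (M₁ / Real.sqrt 1))⁻¹ ^ 2 *
      min ((1 : ℝ) ^ (-(d : ℝ) / α)) (1 / M₂ ^ ((d : ℝ) + α)) with hA₁def
  have hA₁pos : 0 < A₁ := by
    apply mul_pos
    · have h1 : 0 < Real.sqrt 1 * max 1 (M₁ / Real.sqrt 1) := by
        apply mul_pos (by rw [Real.sqrt_one]; norm_num)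
        exact lt_of_lt_of_le one_pos (le_max_left _ _)
      positivity
    · exact lt_min (Real.rpow_pos_of_pos one_pos _) (by positivity)
  set A₂ : ℝ := (Real.sqrt Tm * max 1 (M₁ / Real.sqrt T))⁻¹ ^ 2 *
      min (Tm ^ (-(d : ℝ) / α)) (T / M₂ ^ ((d : ℝ) + α)) with hA₂def
  have hA₂pos : 0 < A₂ := by
    apply mul_pos
    · have h1 : 0 < Real.sqrt Tm * max 1 (M₁ / Real.sqrt T) := by
        apply mul_pos (Real.sqrt_pos.mpr hTm0)
        exact lt_of_lt_of_le one_pos (le_max_left _ _)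
      positivity
    · exact lt_min (Real.rpow_pos_of_pos hTm0 _) (by positivity)
  -- two-sided bounds for p at time 1
  have hp1 : ∀ x ∈ D, ∀ y ∈ D,
      c⁻¹ * A₁ * (deltaD D x ^ (α / 2) * deltaD D y ^ (α / 2)) ≤ p 1 x y ∧
      p 1 x y ≤ c * (deltaD D x ^ (α / 2) * deltaD D y ^ (α / 2)) := by
    intro x hx y hy
    have hcmp := hcomp 1 one_pos ((by norm_num : (1:ℝ) ≤ 3).trans hTm3) x hx y hy
    constructor
    · have hf := fKer_lower (hα := hα0) (t := 1) (t₁ := 1) (t₂ := 1) one_pos le_rfl le_rfl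
        hM₁ hM₂ (hgle x hx) (hgle y hy) (hxyM x hx y hy)
      calc c⁻¹ * A₁ * (deltaD D x ^ (α / 2) * deltaD D y ^ (α / 2))
          = c⁻¹ * (deltaD D x ^ (α / 2) * deltaD D y ^ (α / 2) * A₁) := by ring
        _ ≤ c⁻¹ * fKer α D 1 x y := by
            apply mul_le_mul_of_nonneg_left _ (by positivity)
            rw [hA₁def]; exact hf
        _ ≤ p 1 x y := hcmp.1
    · have hf := fKer_upper (D := D) (α := α) (t := 1) one_pos x y
      calc p 1 x y ≤ c * fKer α D 1 x y := hcmp.2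
        _ ≤ c * (deltaD D x ^ (α / 2) * deltaD D y ^ (α / 2) * ((1 : ℝ)⁻¹ * (1 : ℝ) ^ (-(d : ℝ) / α))) := by
            apply mul_le_mul_of_nonneg_left hf (by positivity)
        _ = c * (deltaD D x ^ (α / 2) * deltaD D y ^ (α / 2)) := by
            rw [Real.one_rpow]; ring
  -- integrability facts
  have hφsq_int : IntegrableOn (fun x => φ x ^ 2) D := by
    by_contra hni
    rw [integral_undef hni] at hφnorm
    norm_num at hφnorm
  have hφint : IntegrableOn φ D := by
    have hb : IntegrableOn (fun x => 1 + φ x ^ 2) D :=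
      (integrableOn_const hvolD.ne).add hφsq_int
    refine Integrable.mono' hb hφmeas.aestronglyMeasurable ?_
    filter_upwards with a
    rw [Real.norm_eq_abs]
    nlinarith [sq_nonneg (|φ a| - 1), sq_abs (φ a), abs_nonneg (φ a)]
  have hδmeas : Measurable fun y : EuclideanSpace ℝ (Fin d) => deltaD D y ^ (α / 2) := by
    have h1 : Continuous fun y : EuclideanSpace ℝ (Fin d) => deltaD D y :=
      continuous_infDist_pt (frontier D)
    exact (h1.rpow_const (fun y => Or.inr (by positivity))).measurable
  have hgφ_int : IntegrableOn (fun y => deltaD D y ^ (α / 2) * φ y) D := by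
    refine Integrable.mono' (hφint.const_mul M₁) ((hδmeas.mul hφmeas).aestronglyMeasurable) ?_
    rw [ae_restrict_iff' hDmeas]
    filter_upwards with y hy
    rw [Real.norm_eq_abs, abs_of_nonneg (mul_nonneg (hg0 y) (hφpos y hy).le)]
    exact mul_le_mul_of_nonneg_right (hgle y hy) (hφpos y hy).le
  set I : ℝ := ∫ y in D, deltaD D y ^ (α / 2) * φ y with hIdef
  -- integrability of p(1,x,·)φ and two-sided bounds for e^{-λ₁}φ(x)
  have hpmul_meas : ∀ t, 0 < t → ∀ x : EuclideanSpace ℝ (Fin d),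
      Measurable fun y => p t x y := by
    intro t ht x
    exact (hmeas t ht).comp measurable_prodMk_left
  have hpmul_meas' : ∀ t, 0 < t → ∀ y : EuclideanSpace ℝ (Fin d),
      Measurable fun z => p t z y := by
    intro t ht y
    exact (hmeas t ht).comp (measurable_id.prodMk measurable_const)
  have hpφ_int : ∀ x ∈ D, IntegrableOn (fun y => p 1 x y * φ y) D := by
    intro x hx
    refine Integrable.mono' (hgφ_int.const_mul (c * M₁))
      (((hpmul_meas 1 one_pos x).mul hφmeas).aestronglyMeasurable) ?_
    rw [ae_restrict_iff' hDmeas]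
    filter_upwards with y hy
    rw [Real.norm_eq_abs, abs_of_nonneg (mul_nonneg (hnonneg 1 one_pos x y) (hφpos y hy).le)]
    have h1 : p 1 x y ≤ c * (deltaD D x ^ (α / 2) * deltaD D y ^ (α / 2)) := (hp1 x hx y hy).2
    have h2 : c * (deltaD D x ^ (α / 2) * deltaD D y ^ (α / 2)) ≤ c * (M₁ * deltaD D y ^ (α / 2)) := by
      exact mul_le_mul_of_nonneg_left
        (mul_le_mul_of_nonneg_right (hgle x hx) (hg0 y)) hc0.le
    calc p 1 x y * φ y ≤ c * (M₁ * deltaD D y ^ (α / 2)) * φ y :=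
          mul_le_mul_of_nonneg_right (h1.trans h2) (hφpos y hy).le
      _ = c * M₁ * (deltaD D y ^ (α / 2) * φ y) := by ring
  have hφ_up : ∀ x ∈ D, Real.exp (-lam₁) * φ x ≤ c * deltaD D x ^ (α / 2) * I := by
    intro x hx
    have he := heig 1 one_pos x hx
    rw [mul_one] at he
    rw [← he]
    have hmono : (∫ y in D, p 1 x y * φ y) ≤
        ∫ y in D, c * deltaD D x ^ (α / 2) * (deltaD D y ^ (α / 2) * φ y) := by
      refine setIntegral_mono_on (hpφ_int x hx) (hgφ_int.const_mul _) hDmeas ?_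
      intro y hy
      have h1 := (hp1 x hx y hy).2
      calc p 1 x y * φ y ≤ c * (deltaD D x ^ (α / 2) * deltaD D y ^ (α / 2)) * φ y :=
            mul_le_mul_of_nonneg_right h1 (hφpos y hy).le
        _ = c * deltaD D x ^ (α / 2) * (deltaD D y ^ (α / 2) * φ y) := by ring
    rw [integral_const_mul] at hmono
    exact hmono.trans_eq (by rw [hIdef])
  have hφ_lo : ∀ x ∈ D, c⁻¹ * A₁ * deltaD D x ^ (α / 2) * I ≤ Real.exp (-lam₁) * φ x := by
    intro x hx
    have he := heig 1 one_pos x hx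
    rw [mul_one] at he
    rw [← he]
    have hmono : (∫ y in D, c⁻¹ * A₁ * deltaD D x ^ (α / 2) * (deltaD D y ^ (α / 2) * φ y)) ≤
        ∫ y in D, p 1 x y * φ y := by
      refine setIntegral_mono_on (hgφ_int.const_mul _) (hpφ_int x hx) hDmeas ?_
      intro y hy
      have h1 := (hp1 x hx y hy).1
      calc c⁻¹ * A₁ * deltaD D x ^ (α / 2) * (deltaD D y ^ (α / 2) * φ y)
          = c⁻¹ * A₁ * (deltaD D x ^ (α / 2) * deltaD D y ^ (α / 2)) * φ y := by ring
        _ ≤ p 1 x y * φ y := mul_le_mul_of_nonneg_right h1 (hφpos y hy).le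
    rw [integral_const_mul] at hmono
    exact le_trans (le_of_eq (by rw [hIdef])) hmono
  have hIpos : 0 < I := by
    obtain ⟨x₀, hx₀⟩ := hDne
    have h1 := hφ_up x₀ hx₀
    have h2 : 0 < Real.exp (-lam₁) * φ x₀ := mul_pos (Real.exp_pos _) (hφpos x₀ hx₀)
    nlinarith [hgpos x₀ hx₀, mul_pos hc0 (hgpos x₀ hx₀)]
  -- φ is comparable to deltaD ^ (α/2)
  set K : ℝ := Real.exp lam₁ * (c * I) with hKdef
  set k : ℝ := Real.exp lam₁ * (c⁻¹ * A₁ * I) with hkdef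
  have hKpos : 0 < K := mul_pos (Real.exp_pos _) (mul_pos hc0 hIpos)
  have hkpos : 0 < k :=
    mul_pos (Real.exp_pos _) (mul_pos (mul_pos (inv_pos.mpr hc0) hA₁pos) hIpos)
  have e1 : Real.exp lam₁ * Real.exp (-lam₁) = 1 := by
    rw [← Real.exp_add]; simp
  have hφ_le : ∀ x ∈ D, φ x ≤ K * deltaD D x ^ (α / 2) := by
    intro x hx
    calc φ x = Real.exp lam₁ * (Real.exp (-lam₁) * φ x) := by
          rw [← mul_assoc, e1, one_mul]
      _ ≤ Real.exp lam₁ * (c * deltaD D x ^ (α / 2) * I) :=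
          mul_le_mul_of_nonneg_left (hφ_up x hx) (Real.exp_pos _).le
      _ = K * deltaD D x ^ (α / 2) := by rw [hKdef]; ring
  have hφ_ge : ∀ x ∈ D, k * deltaD D x ^ (α / 2) ≤ φ x := by
    intro x hx
    calc k * deltaD D x ^ (α / 2) = Real.exp lam₁ * (c⁻¹ * A₁ * deltaD D x ^ (α / 2) * I) := by
          rw [hkdef]; ring
      _ ≤ Real.exp lam₁ * (Real.exp (-lam₁) * φ x) :=
          mul_le_mul_of_nonneg_left (hφ_lo x hx) (Real.exp_pos _).le
      _ = φ x := by rw [← mul_assoc, e1, one_mul]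
  -- the two main constants
  have hexpd : -(d : ℝ) / α ≤ 0 :=
    div_nonpos_of_nonpos_of_nonneg (neg_nonpos.mpr (by positivity)) hα0.le
  set C₁ : ℝ := min (c⁻¹ * A₂) (c⁻¹ * A₁ * k / K) with hC₁def
  set C₂ : ℝ := max (c * (T⁻¹ * T ^ (-(d : ℝ) / α)) * Real.exp (lam₁ * Tm))
      (c * K * Real.exp lam₁ / k) with hC₂def
  have hC₁pos : 0 < C₁ := lt_min (mul_pos (inv_pos.mpr hc0) hA₂pos)
      (div_pos (mul_pos (mul_pos (inv_pos.mpr hc0) hA₁pos) hkpos) hKpos)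
  -- main bounds
  have hMain : ∀ t, T ≤ t → ∀ x ∈ D, ∀ y ∈ D,
      C₁ * (Real.exp (-lam₁ * t) * (deltaD D x ^ (α / 2) * deltaD D y ^ (α / 2))) ≤ p t x y ∧
      p t x y ≤ C₂ * (Real.exp (-lam₁ * t) * (deltaD D x ^ (α / 2) * deltaD D y ^ (α / 2))) := by
    intro t ht x hx y hy
    have ht0 : 0 < t := hT.trans_le ht
    rcases le_or_gt t Tm with hcase | hcase
    · -- intermediate times
      have hcmp := hcomp t ht0 hcase x hx y hy
      constructor
      · have hf := fKer_lower (hα := hα0) (t := t) (t₁ := T) (t₂ := Tm) hT ht hcase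
          hM₁ hM₂ (hgle x hx) (hgle y hy) (hxyM x hx y hy)
        have hE1 : Real.exp (-lam₁ * t) ≤ 1 := by
          rw [Real.exp_le_one_iff]
          nlinarith
        calc C₁ * (Real.exp (-lam₁ * t) * (deltaD D x ^ (α / 2) * deltaD D y ^ (α / 2)))
            ≤ c⁻¹ * A₂ * (1 * (deltaD D x ^ (α / 2) * deltaD D y ^ (α / 2))) := by
              apply mul_le_mul (min_le_left _ _)
                (mul_le_mul_of_nonneg_right hE1 (mul_nonneg (hg0 x) (hg0 y)))
                (mul_nonneg (Real.exp_pos _).le (mul_nonneg (hg0 x) (hg0 y)))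
                (by positivity)
          _ = c⁻¹ * (deltaD D x ^ (α / 2) * deltaD D y ^ (α / 2) * A₂) := by ring
          _ ≤ c⁻¹ * fKer α D t x y := by
              apply mul_le_mul_of_nonneg_left _ (by positivity)
              rw [hA₂def]; exact hf
          _ ≤ p t x y := hcmp.1
      · have hf := fKer_upper (D := D) (α := α) ht0 x y
        have h3 : t⁻¹ ≤ T⁻¹ := inv_anti₀ hT ht
        have h4 : t ^ (-(d : ℝ) / α) ≤ T ^ (-(d : ℝ) / α) :=
          Real.rpow_le_rpow_of_nonpos hT ht hexpd
        have h34 : t⁻¹ * t ^ (-(d : ℝ) / α) ≤ T⁻¹ * T ^ (-(d : ℝ) / α) :=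
          mul_le_mul h3 h4 (Real.rpow_nonneg ht0.le _) (by positivity)
        have h5 : 1 ≤ Real.exp (lam₁ * Tm) * Real.exp (-lam₁ * t) := by
          rw [← Real.exp_add]
          apply Real.one_le_exp
          nlinarith
        have hX0 : 0 ≤ c * (deltaD D x ^ (α / 2) * deltaD D y ^ (α / 2) *
            (T⁻¹ * T ^ (-(d : ℝ) / α))) := by
          apply mul_nonneg hc0.le
          apply mul_nonneg (mul_nonneg (hg0 x) (hg0 y)) (by positivity)
        calc p t x y ≤ c * fKer α D t x y := hcmp.2
          _ ≤ c * (deltaD D x ^ (α / 2) * deltaD D y ^ (α / 2) *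
                (t⁻¹ * t ^ (-(d : ℝ) / α))) :=
              mul_le_mul_of_nonneg_left hf hc0.le
          _ ≤ c * (deltaD D x ^ (α / 2) * deltaD D y ^ (α / 2) *
                (T⁻¹ * T ^ (-(d : ℝ) / α))) :=
              mul_le_mul_of_nonneg_left
                (mul_le_mul_of_nonneg_left h34 (mul_nonneg (hg0 x) (hg0 y))) hc0.le
          _ ≤ c * (deltaD D x ^ (α / 2) * deltaD D y ^ (α / 2) *
                (T⁻¹ * T ^ (-(d : ℝ) / α))) * (Real.exp (lam₁ * Tm) * Real.exp (-lam₁ * t)) :=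
              le_mul_of_one_le_right hX0 h5
          _ = c * (T⁻¹ * T ^ (-(d : ℝ) / α)) * Real.exp (lam₁ * Tm) *
                (Real.exp (-lam₁ * t) * (deltaD D x ^ (α / 2) * deltaD D y ^ (α / 2))) := by
              ring
          _ ≤ C₂ * (Real.exp (-lam₁ * t) * (deltaD D x ^ (α / 2) * deltaD D y ^ (α / 2))) := by
              apply mul_le_mul_of_nonneg_right (le_max_left _ _)
              exact mul_nonneg (Real.exp_pos _).le (mul_nonneg (hg0 x) (hg0 y))
    · -- large times, via the semigroup property and the eigenfunction
      have ht1 : 0 < t - 1 := by linarith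
      have hsem := hsemi 1 one_pos (t - 1) ht1 x hx y hy
      have hteq : t - 1 + 1 = t := by ring
      rw [hteq] at hsem
      have heig' := heig (t - 1) ht1 x hx
      have hint0 : IntegrableOn (fun z => p (t - 1) x z * φ z) D := by
        by_contra hni
        rw [integral_undef hni] at heig'
        have h2 := mul_pos (Real.exp_pos (-lam₁ * (t - 1))) (hφpos x hx)
        rw [← heig'] at h2
        exact lt_irrefl _ h2
      have hPPmeas : AEStronglyMeasurable (fun z => p (t - 1) x z * p 1 z y)
          (volume.restrict D) :=
        ((hpmul_meas (t - 1) ht1 x).mul (hpmul_meas' 1 one_pos y)).aestronglyMeasurable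
      have hbound : ∀ z ∈ D, p (t - 1) x z * p 1 z y ≤
          c * deltaD D y ^ (α / 2) / k * (p (t - 1) x z * φ z) := by
        intro z hz
        have h1 : p 1 z y ≤ c * deltaD D y ^ (α / 2) / k * φ z := by
          have hgz : deltaD D z ^ (α / 2) ≤ φ z / k := by
            rw [le_div_iff₀ hkpos]
            have := hφ_ge z hz
            linarith
          calc p 1 z y ≤ c * (deltaD D z ^ (α / 2) * deltaD D y ^ (α / 2)) := (hp1 z hz y hy).2
            _ = c * deltaD D y ^ (α / 2) * deltaD D z ^ (α / 2) := by ring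
            _ ≤ c * deltaD D y ^ (α / 2) * (φ z / k) :=
                mul_le_mul_of_nonneg_left hgz (mul_nonneg hc0.le (hg0 y))
            _ = c * deltaD D y ^ (α / 2) / k * φ z := by ring
        calc p (t - 1) x z * p 1 z y
            ≤ p (t - 1) x z * (c * deltaD D y ^ (α / 2) / k * φ z) :=
              mul_le_mul_of_nonneg_left h1 (hnonneg (t - 1) ht1 x z)
          _ = c * deltaD D y ^ (α / 2) / k * (p (t - 1) x z * φ z) := by ring
      have hintP : IntegrableOn (fun z => p (t - 1) x z * p 1 z y) D := by
        refine Integrable.mono' (hint0.const_mul (c * deltaD D y ^ (α / 2) / k))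
          hPPmeas ?_
        rw [ae_restrict_iff' hDmeas]
        filter_upwards with z hz
        rw [Real.norm_eq_abs, abs_of_nonneg
          (mul_nonneg (hnonneg (t - 1) ht1 x z) (hnonneg 1 one_pos z y))]
        exact hbound z hz
      have hexp1 : Real.exp (-lam₁ * (t - 1)) = Real.exp lam₁ * Real.exp (-lam₁ * t) := by
        rw [← Real.exp_add]; congr 1; ring
      constructor
      · -- lower bound
        have hbound2 : ∀ z ∈ D, c⁻¹ * A₁ * deltaD D y ^ (α / 2) / K *
            (p (t - 1) x z * φ z) ≤ p (t - 1) x z * p 1 z y := by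
          intro z hz
          have h1 : c⁻¹ * A₁ * deltaD D y ^ (α / 2) / K * φ z ≤ p 1 z y := by
            have hgz : φ z / K ≤ deltaD D z ^ (α / 2) := by
              rw [div_le_iff₀ hKpos]
              have := hφ_le z hz
              linarith
            calc c⁻¹ * A₁ * deltaD D y ^ (α / 2) / K * φ z
                = c⁻¹ * A₁ * deltaD D y ^ (α / 2) * (φ z / K) := by ring
              _ ≤ c⁻¹ * A₁ * deltaD D y ^ (α / 2) * deltaD D z ^ (α / 2) :=
                  mul_le_mul_of_nonneg_left hgz
                    (mul_nonneg (mul_nonneg (inv_nonneg.mpr hc0.le) hA₁pos.le) (hg0 y))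
              _ = c⁻¹ * A₁ * (deltaD D z ^ (α / 2) * deltaD D y ^ (α / 2)) := by ring
              _ ≤ p 1 z y := (hp1 z hz y hy).1
          calc c⁻¹ * A₁ * deltaD D y ^ (α / 2) / K * (p (t - 1) x z * φ z)
              = p (t - 1) x z * (c⁻¹ * A₁ * deltaD D y ^ (α / 2) / K * φ z) := by ring
            _ ≤ p (t - 1) x z * p 1 z y :=
                mul_le_mul_of_nonneg_left h1 (hnonneg (t - 1) ht1 x z)
        have hmono := setIntegral_mono_on
          (hint0.const_mul (c⁻¹ * A₁ * deltaD D y ^ (α / 2) / K)) hintP hDmeas hbound2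
        rw [integral_const_mul, heig'] at hmono
        have he1 : (1 : ℝ) ≤ Real.exp lam₁ := Real.one_le_exp hlam₁.le
        have hE0 : 0 ≤ Real.exp (-lam₁ * t) := (Real.exp_pos _).le
        calc C₁ * (Real.exp (-lam₁ * t) * (deltaD D x ^ (α / 2) * deltaD D y ^ (α / 2)))
            ≤ c⁻¹ * A₁ * k / K *
                (Real.exp (-lam₁ * t) * (deltaD D x ^ (α / 2) * deltaD D y ^ (α / 2))) := by
              apply mul_le_mul_of_nonneg_right (min_le_right _ _)
              exact mul_nonneg hE0 (mul_nonneg (hg0 x) (hg0 y))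
          _ = c⁻¹ * A₁ * deltaD D y ^ (α / 2) / K *
                (Real.exp (-lam₁ * t) * (k * deltaD D x ^ (α / 2))) := by ring
          _ ≤ c⁻¹ * A₁ * deltaD D y ^ (α / 2) / K *
                (Real.exp (-lam₁ * t) * φ x) := by
              apply mul_le_mul_of_nonneg_left
                (mul_le_mul_of_nonneg_left (hφ_ge x hx) hE0)
                (div_nonneg (mul_nonneg (mul_nonneg (inv_nonneg.mpr hc0.le) hA₁pos.le)
                  (hg0 y)) hKpos.le)
          _ ≤ c⁻¹ * A₁ * deltaD D y ^ (α / 2) / K *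
                (Real.exp lam₁ * Real.exp (-lam₁ * t) * φ x) := by
              apply mul_le_mul_of_nonneg_left _
                (div_nonneg (mul_nonneg (mul_nonneg (inv_nonneg.mpr hc0.le) hA₁pos.le)
                  (hg0 y)) hKpos.le)
              apply mul_le_mul_of_nonneg_right _ (hφpos x hx).le
              exact le_mul_of_one_le_left hE0 he1
          _ = c⁻¹ * A₁ * deltaD D y ^ (α / 2) / K *
                (Real.exp (-lam₁ * (t - 1)) * φ x) := by rw [hexp1]
          _ ≤ ∫ z in D, p (t - 1) x z * p 1 z y := hmono
          _ = p t x y := hsem.symm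
      · -- upper bound
        have hmono := setIntegral_mono_on hintP
          (hint0.const_mul (c * deltaD D y ^ (α / 2) / k)) hDmeas hbound
        rw [integral_const_mul, heig'] at hmono
        calc p t x y = ∫ z in D, p (t - 1) x z * p 1 z y := hsem
          _ ≤ c * deltaD D y ^ (α / 2) / k * (Real.exp (-lam₁ * (t - 1)) * φ x) := hmono
          _ ≤ c * deltaD D y ^ (α / 2) / k *
                (Real.exp (-lam₁ * (t - 1)) * (K * deltaD D x ^ (α / 2))) := by
              apply mul_le_mul_of_nonneg_left
                (mul_le_mul_of_nonneg_left (hφ_le x hx) (Real.exp_pos _).le)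
                (div_nonneg (mul_nonneg hc0.le (hg0 y)) hkpos.le)
          _ = c * K * Real.exp lam₁ / k *
                (Real.exp (-lam₁ * t) * (deltaD D x ^ (α / 2) * deltaD D y ^ (α / 2))) := by
              rw [hexp1]; ring
          _ ≤ C₂ * (Real.exp (-lam₁ * t) * (deltaD D x ^ (α / 2) * deltaD D y ^ (α / 2))) := by
              apply mul_le_mul_of_nonneg_right (le_max_right _ _)
              exact mul_nonneg (Real.exp_pos _).le (mul_nonneg (hg0 x) (hg0 y))
  -- assemble the final constant
  refine ⟨max 1 (max C₂ C₁⁻¹), le_max_left _ _, ?_⟩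
  intro t ht x hx y hy
  have hCinv : (max 1 (max C₂ C₁⁻¹))⁻¹ ≤ C₁ := by
    have h1 : C₁⁻¹ ≤ max 1 (max C₂ C₁⁻¹) :=
      le_trans (le_max_right C₂ _) (le_max_right 1 _)
    have h2 := inv_anti₀ (inv_pos.mpr hC₁pos) h1
    rwa [inv_inv] at h2
  have hC₂C : C₂ ≤ max 1 (max C₂ C₁⁻¹) :=
    le_trans (le_max_left _ _) (le_max_right 1 _)
  have hpos : 0 ≤ Real.exp (-lam₁ * t) * (deltaD D x ^ (α / 2) * deltaD D y ^ (α / 2)) :=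
    mul_nonneg (Real.exp_pos _).le (mul_nonneg (hg0 x) (hg0 y))
  obtain ⟨hmain1, hmain2⟩ := hMain t ht x hx y hy
  constructor
  · calc (max 1 (max C₂ C₁⁻¹))⁻¹ * Real.exp (-lam₁ * t) * deltaD D x ^ (α / 2) *
          deltaD D y ^ (α / 2)
        = (max 1 (max C₂ C₁⁻¹))⁻¹ *
            (Real.exp (-lam₁ * t) * (deltaD D x ^ (α / 2) * deltaD D y ^ (α / 2))) := by ring
      _ ≤ C₁ * (Real.exp (-lam₁ * t) * (deltaD D x ^ (α / 2) * deltaD D y ^ (α / 2))) :=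
          mul_le_mul_of_nonneg_right hCinv hpos
      _ ≤ p t x y := hmain1
  · calc p t x y
        ≤ C₂ * (Real.exp (-lam₁ * t) * (deltaD D x ^ (α / 2) * deltaD D y ^ (α / 2))) := hmain2
      _ ≤ max 1 (max C₂ C₁⁻¹) *
            (Real.exp (-lam₁ * t) * (deltaD D x ^ (α / 2) * deltaD D y ^ (α / 2))) :=
          mul_le_mul_of_nonneg_right hC₂C hpos
      _ = max 1 (max C₂ C₁⁻¹) * Real.exp (-lam₁ * t) * deltaD D x ^ (α / 2) *
            deltaD D y ^ (α / 2) := by ring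
end
end
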